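/- For Hermitian H and a density matrix ρ on a finite-dimensional Hilbert space, ‖[H, ρ]‖₁ ≤ 2·√(tr(ρ H²) − (tr(ρ H))²), i.e., the trace norm of the commutator is bounded by twice the square root of the variance of H in the state ρ. -/

import Mathlib

open scoped BigOperators ComplexOrder Matrix

/-- Schatten 1-norm (trace norm) of a complex matrix: `tr √(AᴴA)`. -/
noncomputable def traceNorm {n : Type*} [Fintype n] [DecidableEq n] (A : Matrix n n ℂ) : ℝ :=
  (((Matrix.posSemidef_conjTranspose_mul_self A).1.eigenvectorUnitary.1 *
      Matrix.diagonal (((↑) : ℝ → ℂ) ∘ Real.sqrt ∘ (Matrix.posSemidef_conjTranspose_mul_self A).1.eigenvalues) *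
      (star (Matrix.posSemidef_conjTranspose_mul_self A).1.eigenvectorUnitary : Matrix n n ℂ)).trace).re

/-!
Write `ρ = S²` with `S = √ρ` and centre `H₀ = H - tr(ρH)`. Then `[H, ρ] = Y - Yᴴ` with
`Y = (S H₀)ᴴ S`, whose trace norm is `∑ⱼ |λⱼ|` over the eigenvalues of the Hermitian `i(Y - Yᴴ)`.
In an orthonormal eigenbasis `uⱼ` one has `λⱼ = -2 Im ⟪S H₀ uⱼ, S uⱼ⟫`, so Cauchy–Schwarz, first
in each inner product and then in the sum over `j`, bounds `∑ⱼ |λⱼ|` by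
`2 √(tr(H₀ ρ H₀)) √(tr ρ)`, which is twice the standard deviation of `H`.
-/

namespace Matrix

variable {m n 𝕜 : Type*} [Fintype m] [RCLike 𝕜]

lemma IsHermitian.trace_cfc [Fintype n] [DecidableEq n] {A : Matrix n n 𝕜} (hA : A.IsHermitian)
    (f : ℝ → ℝ) :
    (cfc f A).trace = ∑ i, (f (hA.eigenvalues i) : 𝕜) := by
  rw [hA.cfc_eq, IsHermitian.cfc, Unitary.conjStarAlgAut_apply, trace_mul_cycle,
    Unitary.coe_star_mul_self, one_mul, trace_diagonal]
  rfl

lemma IsHermitian.star_eigenvectorUnitary_mul_mul_self_apply [Fintype n] [DecidableEq n]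
    {A : Matrix n n 𝕜} (hA : A.IsHermitian) (i : n) :
    (star (hA.eigenvectorUnitary : Matrix n n 𝕜) * A * hA.eigenvectorUnitary) i i =
      hA.eigenvalues i := by
  rw [← Unitary.conjStarAlgAut_star_apply (S := 𝕜), hA.conjStarAlgAut_star_eigenvectorUnitary,
    diagonal_apply_eq, Function.comp_apply]

lemma re_diag_conjTranspose_mul_self (A : Matrix m n 𝕜) (j : n) :
    RCLike.re ((Aᴴ * A) j j) = ∑ k, ‖A k j‖ ^ 2 := by
  simp [mul_apply, RCLike.conj_mul]

lemma norm_diag_conjTranspose_mul_le (A B : Matrix m n 𝕜) (j : n) :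
    ‖(Aᴴ * B) j j‖ ≤ √(RCLike.re ((Aᴴ * A) j j)) * √(RCLike.re ((Bᴴ * B) j j)) := by
  rw [re_diag_conjTranspose_mul_self, re_diag_conjTranspose_mul_self]
  calc ‖(Aᴴ * B) j j‖ ≤ ∑ k, ‖A k j‖ * ‖B k j‖ := by
        simpa [mul_apply] using norm_sum_le _ fun k => star (A k j) * B k j
    _ ≤ _ := Real.sum_mul_le_sqrt_mul_sqrt _ _ _

lemma sum_norm_diag_conjTranspose_mul_le [Fintype n] (A B : Matrix m n 𝕜) :
    ∑ j, ‖(Aᴴ * B) j j‖ ≤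
      √(RCLike.re (Aᴴ * A).trace) * √(RCLike.re (Bᴴ * B).trace) := by
  have hdiag_nonneg (C : Matrix m n 𝕜) (j : n) : 0 ≤ RCLike.re ((Cᴴ * C) j j) := by
    rw [re_diag_conjTranspose_mul_self]; positivity
  calc ∑ j, ‖(Aᴴ * B) j j‖
      ≤ ∑ j, √(RCLike.re ((Aᴴ * A) j j)) * √(RCLike.re ((Bᴴ * B) j j)) :=
        Finset.sum_le_sum fun j _ => norm_diag_conjTranspose_mul_le A B j
    _ ≤ _ := by
        simpa only [trace, diag_apply, map_sum] using
          Real.sum_sqrt_mul_sqrt_le _ (hdiag_nonneg A) (hdiag_nonneg B)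

end Matrix

open Matrix
open scoped MatrixOrder

section

variable {m n : Type*} [Fintype m] [Fintype n] [DecidableEq n]

lemma traceNorm_eq_re_trace_cfc_sqrt (A : Matrix n n ℂ) :
    traceNorm A = ((cfc Real.sqrt (Aᴴ * A)).trace).re := by
  rw [(posSemidef_conjTranspose_mul_self A).1.cfc_eq]
  rfl

lemma traceNorm_eq_sum_abs_eigenvalues {A : Matrix n n ℂ} (hA : A.IsHermitian) :
    traceNorm A = ∑ i, |hA.eigenvalues i| := by
  have hsq : cfc Real.sqrt (Aᴴ * A) = cfc (fun x : ℝ => |x|) A := by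
    rw [hA.eq, ← sq, ← cfc_comp_pow Real.sqrt 2 A]
    simp_rw [Real.sqrt_sq_eq_abs]
  rw [traceNorm_eq_re_trace_cfc_sqrt, hsq, hA.trace_cfc]
  simp [Complex.re_sum]

lemma traceNorm_I_smul (A : Matrix n n ℂ) : traceNorm (Complex.I • A) = traceNorm A := by
  simp_rw [traceNorm_eq_re_trace_cfc_sqrt, conjTranspose_smul, smul_mul_smul_comm,
    Complex.star_def, Complex.conj_I, neg_mul, Complex.I_mul_I, neg_neg, one_smul]

lemma traceNorm_conjTranspose_mul_sub_le (A B : Matrix m n ℂ) :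
    traceNorm (Aᴴ * B - Bᴴ * A) ≤ 2 * (√(Aᴴ * A).trace.re * √(Bᴴ * B).trace.re) := by
  set Y := Aᴴ * B
  have hM : (Complex.I • (Y - Yᴴ)).IsHermitian := by
    simp [IsHermitian, conjTranspose_smul, smul_sub, neg_add_eq_sub]
  set U := (hM.eigenvectorUnitary : Matrix n n ℂ)
  set Z := (A * U)ᴴ * (B * U)
  have hconj : star U * (Complex.I • (Y - Yᴴ)) * U = Complex.I • (Z - Zᴴ) := by
    simp only [Z, Y, Matrix.mul_smul, Matrix.smul_mul, Matrix.mul_sub, Matrix.sub_mul,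
      conjTranspose_mul, conjTranspose_conjTranspose, star_eq_conjTranspose, Matrix.mul_assoc]
  have habs (j : n) : |hM.eigenvalues j| ≤ 2 * ‖Z j j‖ := by
    have hentry := hM.star_eigenvectorUnitary_mul_mul_self_apply j
    rw [hconj] at hentry
    calc |hM.eigenvalues j| = ‖Complex.I * (Z j j - star (Z j j))‖ := by
          rw [← RCLike.norm_ofReal (K := ℂ), ← hentry]
          simp
      _ ≤ ‖Z j j‖ + ‖star (Z j j)‖ := by
          rw [norm_mul, Complex.norm_I, one_mul]; exact norm_sub_le _ _
      _ = 2 * ‖Z j j‖ := by rw [norm_star]; ring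
  have htrace (C : Matrix m n ℂ) : ((C * U)ᴴ * (C * U)).trace = (Cᴴ * C).trace := by
    rw [conjTranspose_mul, Matrix.mul_assoc, trace_mul_comm, Matrix.mul_assoc, Matrix.mul_assoc,
      ← star_eq_conjTranspose, Unitary.mul_star_self_of_mem hM.eigenvectorUnitary.2,
      Matrix.mul_one]
  have hK : Bᴴ * A = Yᴴ := by simp [Y, conjTranspose_mul]
  calc traceNorm (Aᴴ * B - Bᴴ * A) = ∑ j, |hM.eigenvalues j| := by
        rw [hK, ← traceNorm_I_smul, traceNorm_eq_sum_abs_eigenvalues hM]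
    _ ≤ ∑ j, 2 * ‖Z j j‖ := Finset.sum_le_sum fun j _ => habs j
    _ ≤ 2 * (√(Aᴴ * A).trace.re * √(Bᴴ * B).trace.re) := by
        rw [← Finset.mul_sum, ← htrace A, ← htrace B]
        gcongr
        exact sum_norm_diag_conjTranspose_mul_le _ _

lemma re_trace_mul_sub_smul_one_mul_self {ρ : Matrix n n ℂ} (htr : ρ.trace = 1)
    (H : Matrix n n ℂ) (c : ℝ) :
    (ρ * ((H - (c : ℂ) • 1) * (H - (c : ℂ) • 1))).trace.re =
      (ρ * (H * H)).trace.re - 2 * c * (ρ * H).trace.re + c ^ 2 := by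
  simp only [Matrix.sub_mul, Matrix.mul_sub, Matrix.smul_mul, Matrix.mul_smul, Matrix.one_mul,
    trace_sub, trace_smul, htr, smul_eq_mul, Complex.sub_re, Complex.re_ofReal_mul, mul_one,
    Complex.ofReal_re]
  ring

end

/-- For Hermitian `H` and a density matrix `ρ`,
`‖[H, ρ]‖₁ ≤ 2 √(tr(ρH²) - (tr(ρH))²)`. -/
theorem traceNorm_commutator_le_variance {n : Type*} [Fintype n] [DecidableEq n]
    (H ρ : Matrix n n ℂ) (hH : H.IsHermitian) (hρ : ρ.PosSemidef) (htr : ρ.trace = 1) :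
    traceNorm (H * ρ - ρ * H)
      ≤ 2 * Real.sqrt (((ρ * (H * H)).trace).re - (((ρ * H).trace).re) ^ 2) := by
  set S := CFC.sqrt ρ
  have hS : Sᴴ = S := (nonneg_iff_posSemidef.mp (CFC.sqrt_nonneg ρ)).1
  have hSS : S * S = ρ := CFC.sqrt_mul_sqrt_self ρ hρ.nonneg
  set c := ((ρ * H).trace).re
  set H₀ := H - (c : ℂ) • 1
  have hH₀ : H₀ᴴ = H₀ := hH.sub (by simp [IsHermitian, conjTranspose_smul])
  have hcomm : H * ρ - ρ * H = (S * H₀)ᴴ * S - Sᴴ * (S * H₀) := by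
    rw [conjTranspose_mul, hS, hH₀, Matrix.mul_assoc, ← Matrix.mul_assoc S S, hSS]
    simp only [H₀, Matrix.sub_mul, Matrix.mul_sub, Matrix.smul_mul, Matrix.mul_smul,
      Matrix.one_mul, Matrix.mul_one, sub_sub_sub_cancel_right]
  have hvar : ((S * H₀)ᴴ * (S * H₀)).trace.re = (ρ * (H * H)).trace.re - c ^ 2 := by
    rw [conjTranspose_mul, hS, hH₀, Matrix.mul_assoc, ← Matrix.mul_assoc S, hSS, trace_mul_comm,
      Matrix.mul_assoc, re_trace_mul_sub_smul_one_mul_self htr]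
    ring
  have hnorm : (Sᴴ * S).trace.re = 1 := by simp [hS, hSS, htr]
  calc traceNorm (H * ρ - ρ * H)
      ≤ 2 * (√((S * H₀)ᴴ * (S * H₀)).trace.re * √(Sᴴ * S).trace.re) :=
        hcomm ▸ traceNorm_conjTranspose_mul_sub_le _ _
    _ = _ := by rw [hvar, hnorm, Real.sqrt_one, mul_one]
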